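/- arXiv:1301.4082 — 10 statements merged into one kernel-verified Lean document; each statement's English description precedes it below -/
import Mathlib

section
/- Let ρ₁₂ be any complex matrix on ℂ² ⊗ ℂ² (a 4×4 matrix indexed by Fin 2 × Fin 2, the first factor being subsystem 1), and let ρ₂₁ be its swap reindexing. Define the 4×4 matrix S with rows indexed by n ∈ Fin 4 and columns by m ∈ Fin 4 via S_{n m} = (1/2)·tr[ρ₁₂ · (σ_m ⊗ σ_n)]. Then S = U† · R(ρ₂₁^T₁) · U. -/
/-!
Both sides are the same quadruple sum over the entries of `ρ₁₂`: `tr[ρ (A ⊗ B)]` is a bilinear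
form in the entries of `A` and `B` whose matrix is `R(ρ₂₁^T₁)`, and since the Pauli matrices are
Hermitian, the conjugated columns of `U` are the transposed Pauli matrices divided by `√2`.
-/

open Matrix Kronecker

noncomputable section

/-- Partial transpose on the second tensor factor. -/
def PT1 {d₂ d₁ : ℕ} (M : Matrix (Fin d₂ × Fin d₁) (Fin d₂ × Fin d₁) ℂ) :
    Matrix (Fin d₂ × Fin d₁) (Fin d₂ × Fin d₁) ℂ :=
  fun p q => M (p.1, q.2) (q.1, p.2)

/-- Realignment. -/
def realign {d₂ d₁ : ℕ} (M : Matrix (Fin d₂ × Fin d₁) (Fin d₂ × Fin d₁) ℂ) :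
    Matrix (Fin d₂ × Fin d₂) (Fin d₁ × Fin d₁) ℂ :=
  fun p q => M (p.1, q.1) (p.2, q.2)

/-- Swap reindexing. -/
def swapRe {d₂ d₁ : ℕ} (ρ : Matrix (Fin d₂ × Fin d₁) (Fin d₂ × Fin d₁) ℂ) :
    Matrix (Fin d₁ × Fin d₂) (Fin d₁ × Fin d₂) ℂ :=
  fun p q => ρ (p.2, p.1) (q.2, q.1)

/-- SWAP operator. -/
def swapOp (d : ℕ) : Matrix (Fin d × Fin d) (Fin d × Fin d) ℂ :=
  fun p q => if p.1 = q.2 ∧ p.2 = q.1 then 1 else 0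

/-- Pauli matrices (with σ₀ the identity). -/
def pauli : Fin 4 → Matrix (Fin 2) (Fin 2) ℂ
  | 0 => !![1, 0; 0, 1]
  | 1 => !![0, 1; 1, 0]
  | 2 => !![0, -Complex.I; Complex.I, 0]
  | 3 => !![1, 0; 0, -1]

/-- The matrix U with entries U_{(j,i),m} = (σ_m)_{ji}/√2. -/
def Umat : Matrix (Fin 2 × Fin 2) (Fin 4) ℂ :=
  fun p m => (1 / Real.sqrt 2 : ℝ) * pauli m p.1 p.2


theorem trace_mul_kronecker_eq_sum_realign {d₂ d₁ : ℕ}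
    (ρ : Matrix (Fin d₂ × Fin d₁) (Fin d₂ × Fin d₁) ℂ)
    (A : Matrix (Fin d₂) (Fin d₂) ℂ) (B : Matrix (Fin d₁) (Fin d₁) ℂ) :
    trace (ρ * (A ⊗ₖ B)) =
      ∑ q : Fin d₂ × Fin d₂, ∑ p : Fin d₁ × Fin d₁,
        B p.2 p.1 * realign (PT1 (swapRe ρ)) p q * A q.1 q.2 := by
  simp only [trace, diag, mul_apply, kroneckerMap_apply, realign, PT1, swapRe,
    Fintype.sum_prod_type]
  conv_lhs => enter [2, a]; rw [Finset.sum_comm]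
  rw [Finset.sum_comm]
  refine Finset.sum_congr rfl fun c _ => Finset.sum_congr rfl fun a _ =>
    Finset.sum_congr rfl fun b _ => Finset.sum_congr rfl fun d _ => ?_
  ring

theorem pauli_isHermitian (m : Fin 4) : (pauli m).IsHermitian := by
  fin_cases m <;> ext i j <;> fin_cases i <;> fin_cases j <;> simp [pauli]

theorem conjTranspose_Umat_mul_mul_Umat_apply
    (R : Matrix (Fin 2 × Fin 2) (Fin 2 × Fin 2) ℂ) (n m : Fin 4) :
    (Umatᴴ * R * Umat) n m =
      (1 / 2 : ℂ) * ∑ q, ∑ p, pauli n p.2 p.1 * R p q * pauli m q.1 q.2 := by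
  have hstar : ∀ p : Fin 2 × Fin 2, star (pauli n p.1 p.2) = pauli n p.2 p.1 :=
    fun p => (pauli_isHermitian n).apply p.2 p.1
  have hscale : star ((1 / Real.sqrt 2 : ℝ) : ℂ) * ((1 / Real.sqrt 2 : ℝ) : ℂ) = 1 / 2 := by
    rw [Complex.star_def, Complex.conj_ofReal, ← Complex.ofReal_mul, div_mul_div_comm, one_mul,
      Real.mul_self_sqrt zero_le_two]
    norm_num
  simp only [mul_apply, conjTranspose_apply, Umat, star_mul', hstar, Finset.sum_mul,
    Finset.mul_sum]
  refine Finset.sum_congr rfl fun q _ => Finset.sum_congr rfl fun p _ => ?_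
  rw [← hscale]
  ring

/-- the link matrix S with entries S_{nm} = (1/2)·tr[ρ₁₂·(σ_m ⊗ σ_n)]
equals U† · R(ρ₂₁^T₁) · U, where ρ₂₁ is the swap reindexing of ρ₁₂. -/
theorem stmt0 (ρ₁₂ : Matrix (Fin 2 × Fin 2) (Fin 2 × Fin 2) ℂ)
    (S : Matrix (Fin 4) (Fin 4) ℂ)
    (hS : ∀ n m : Fin 4,
      S n m = (1 / 2 : ℂ) * Matrix.trace (ρ₁₂ * (pauli m ⊗ₖ pauli n))) :
    S = Umatᴴ * realign (PT1 (swapRe ρ₁₂)) * Umat := by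
  ext n m
  rw [hS, trace_mul_kronecker_eq_sum_realign, conjTranspose_Umat_mul_mul_Umat_apply]
end
end

section
/- Let d₁, d₂ be natural numbers, let ρ₂₁ be any matrix on ℂ^{d₂} ⊗ ℂ^{d₁}, let V₁ be a unitary d₁ × d₁ complex matrix and V₂ a unitary d₂ × d₂ complex matrix, and set ρ̃₂₁ = (V₂ ⊗ V₁) · ρ₂₁ · (V₂ ⊗ V₁)†, where V₂ ⊗ V₁ is the Kronecker product. Then R(ρ₂₁^T₁) = (V₂ ⊗ V₂*)† · R(ρ̃₂₁^T₁) · (V₁ ⊗ V₁*), where V* denotes the entrywise complex conjugate. -/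
/-! Entrywise `R(M^T₁)_{(i,j),(α,β)} = M_{(i,β),(j,α)}`, so multiplying `M` by `A ⊗ B` on the left
and by `C ⊗ D` on the right multiplies `R(M^T₁)` by `A ⊗ Cᵀ` on the left and by `D ⊗ Bᵀ` on the
right. For the local unitary `V₂ ⊗ V₁` these factors are the unitaries `V₂ ⊗ V₂*` and
`(V₁ ⊗ V₁*)†`, which cancel against the outer factors of the claimed identity. -/

open Matrix Kronecker

noncomputable section

theorem realign_PT1_kronecker_mul_mul_kronecker {d₁ d₂ e₁ e₂ : ℕ}
    (A : Matrix (Fin d₂) (Fin e₂) ℂ) (B : Matrix (Fin d₁) (Fin e₁) ℂ)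
    (M : Matrix (Fin e₂ × Fin e₁) (Fin e₂ × Fin e₁) ℂ)
    (C : Matrix (Fin e₂) (Fin d₂) ℂ) (D : Matrix (Fin e₁) (Fin d₁) ℂ) :
    realign (PT1 ((A ⊗ₖ B) * M * (C ⊗ₖ D))) = (A ⊗ₖ Cᵀ) * realign (PT1 M) * (D ⊗ₖ Bᵀ) := by
  ext ⟨i, j⟩ ⟨α, β⟩
  simp only [realign, PT1, mul_apply, kroneckerMap_apply, transpose_apply,
    Fintype.sum_prod_type, Finset.sum_mul]
  rw [Finset.sum_comm]
  refine Finset.sum_congr rfl fun γ _ => ?_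
  rw [Finset.sum_comm_cycle]
  refine Finset.sum_congr rfl fun δ _ => ?_
  rw [Finset.sum_comm]
  exact Finset.sum_congr rfl fun k _ => Finset.sum_congr rfl fun l _ => by ring

theorem realign_PT1_kronecker_conj {d₁ d₂ : ℕ}
    (ρ : Matrix (Fin d₂ × Fin d₁) (Fin d₂ × Fin d₁) ℂ)
    (V₁ : Matrix (Fin d₁) (Fin d₁) ℂ) (V₂ : Matrix (Fin d₂) (Fin d₂) ℂ) :
    realign (PT1 ((V₂ ⊗ₖ V₁) * ρ * (V₂ ⊗ₖ V₁)ᴴ)) =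
      (V₂ ⊗ₖ V₂.map star) * realign (PT1 ρ) * (V₁ ⊗ₖ V₁.map star)ᴴ := by
  rw [conjTranspose_kronecker, realign_PT1_kronecker_mul_mul_kronecker, conjTranspose_kronecker,
    ← transpose_conjTranspose V₁, conjTranspose_conjTranspose, conjTranspose_transpose]

theorem kronecker_map_star_mem_unitaryGroup {n : Type*} [Fintype n] [DecidableEq n]
    {V : Matrix n n ℂ} (hV : V ∈ unitaryGroup n ℂ) :
    V ⊗ₖ V.map star ∈ unitaryGroup (n × n) ℂ :=
  kronecker_mem_unitary hV (map_star_mem_unitaryGroup_iff.mpr hV)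

/-- transformation law of the realigned partial transpose under
local unitaries: R(ρ₂₁^T₁) = (V₂ ⊗ V₂*)† · R(ρ̃₂₁^T₁) · (V₁ ⊗ V₁*). -/
theorem stmt4 {d₁ d₂ : ℕ}
    (ρ₂₁ : Matrix (Fin d₂ × Fin d₁) (Fin d₂ × Fin d₁) ℂ)
    (V₁ : Matrix (Fin d₁) (Fin d₁) ℂ) (V₂ : Matrix (Fin d₂) (Fin d₂) ℂ)
    (hV₁ : V₁ ∈ Matrix.unitaryGroup (Fin d₁) ℂ)
    (hV₂ : V₂ ∈ Matrix.unitaryGroup (Fin d₂) ℂ) :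
    realign (PT1 ρ₂₁) =
      (V₂ ⊗ₖ V₂.map star)ᴴ *
        realign (PT1 ((V₂ ⊗ₖ V₁) * ρ₂₁ * (V₂ ⊗ₖ V₁)ᴴ)) *
        (V₁ ⊗ₖ V₁.map star) := by
  have hW₁ := Unitary.star_mul_self_of_mem (kronecker_map_star_mem_unitaryGroup hV₁)
  have hW₂ := Unitary.star_mul_self_of_mem (kronecker_map_star_mem_unitaryGroup hV₂)
  rw [realign_PT1_kronecker_conj, ← Matrix.mul_assoc, ← Matrix.mul_assoc, ← star_eq_conjTranspose,
    hW₂, Matrix.one_mul, Matrix.mul_assoc, ← star_eq_conjTranspose, hW₁, Matrix.mul_one]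
end
end

section
/- Consider a closed path on K subsystems (K ≥ 2) with local dimensions d : ZMod K → ℕ and matrices ρ_i on ℂ^{d(i+1)} ⊗ ℂ^{d(i)}, with path operator P. For unitaries V_i (i ∈ ZMod K) let P̃ be the path operator built from the transformed matrices ρ̃_i = (V_{i+1} ⊗ V_i) · ρ_i · (V_{i+1} ⊗ V_i)†. Then P and P̃ have the same characteristic polynomial; in particular tr P = tr P̃, so the trace and the eigenvalues of the path operator are local unitary invariants. -/
open Matrix Kronecker

noncomputable section

/-- Transport a square-block matrix along equalities of dimensions. -/
def mcast {m n m' n' : ℕ} (hm : m = m') (hn : n = n')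
    (A : Matrix (Fin m × Fin m) (Fin n × Fin n) ℂ) :
    Matrix (Fin m' × Fin m') (Fin n' × Fin n') ℂ := hm ▸ hn ▸ A

/-- Partial products M_{n-1} ⋯ M₁ · M₀ of the link matrices along a closed path. -/
def pathProd {K : ℕ} (d : ZMod K → ℕ)
    (M : ∀ i : ZMod K,
      Matrix (Fin (d (i + 1)) × Fin (d (i + 1))) (Fin (d i) × Fin (d i)) ℂ) :
    (n : ℕ) → Matrix (Fin (d (n : ZMod K)) × Fin (d (n : ZMod K)))
      (Fin (d (0 : ZMod K)) × Fin (d (0 : ZMod K))) ℂ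
  | 0 => mcast (congrArg d (Nat.cast_zero (R := ZMod K)).symm) rfl 1
  | n + 1 => mcast (congrArg d (Nat.cast_add_one (R := ZMod K) n).symm) rfl
      (M (n : ZMod K) * pathProd d M n)

/-- The path operator P = M_{K-1} ⋯ M₁ · M₀, a square matrix of size d(0)². -/
def pathOp {K : ℕ} (d : ZMod K → ℕ)
    (M : ∀ i : ZMod K,
      Matrix (Fin (d (i + 1)) × Fin (d (i + 1))) (Fin (d i) × Fin (d i)) ℂ) :
    Matrix (Fin (d (0 : ZMod K)) × Fin (d (0 : ZMod K)))
      (Fin (d (0 : ZMod K)) × Fin (d (0 : ZMod K))) ℂ :=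
  mcast (congrArg d (ZMod.natCast_self K)) rfl (pathProd d M K)

/-!
Conjugating `ρ_i` by `V_{i+1} ⊗ V_i` replaces the link matrix `M_i` by `W_{i+1} M_i W_i⁻¹`,
where `W_j = V_j ⊗ conj V_j` is again unitary. Along the closed path the inner factors cancel,
so the new path operator is `W_0 P W_0⁻¹`, which has the same characteristic polynomial and trace.
-/

lemma realign_PT1_kronecker_mul_mul_conjTranspose {a a' b b' : ℕ}
    (A C : Matrix (Fin a') (Fin a) ℂ) (B D : Matrix (Fin b') (Fin b) ℂ)
    (ρ : Matrix (Fin a × Fin b) (Fin a × Fin b) ℂ) :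
    realign (PT1 ((A ⊗ₖ B) * ρ * (C ⊗ₖ D)ᴴ)) =
      (A ⊗ₖ C.map star) * realign (PT1 ρ) * (D ⊗ₖ B.map star)ᴴ := by
  ext ⟨i, j⟩ ⟨α, β⟩
  simp only [realign, PT1, mul_apply, kroneckerMap_apply, conjTranspose_apply, map_apply,
    Finset.sum_mul, star_mul', star_star]
  rw [← Fintype.sum_prod_type', ← Fintype.sum_prod_type']
  exact Fintype.sum_equiv
    ⟨fun p => ((p.1.2, p.2.2), (p.2.1, p.1.1)), fun q => ((q.2.2, q.1.1), (q.2.1, q.1.2)),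
      fun _ => rfl, fun _ => rfl⟩
    _ _ (fun _ => by simp only [Equiv.coe_fn_mk]; ring)

section mcast

variable {m m' k l : ℕ}

lemma mcast_mul (hm : m = m') (A : Matrix (Fin m × Fin m) (Fin k × Fin k) ℂ)
    (B : Matrix (Fin k × Fin k) (Fin l × Fin l) ℂ) :
    mcast hm rfl (A * B) = mcast hm rfl A * B := by
  subst hm; rfl

lemma mcast_mul_mcast (hm : m = m') (C : Matrix (Fin m × Fin m) (Fin m × Fin m) ℂ)
    (A : Matrix (Fin m × Fin m) (Fin k × Fin k) ℂ) :
    mcast hm hm C * mcast hm rfl A = mcast hm rfl (C * A) := by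
  subst hm; rfl

lemma mcast_congr_index {ι : Type*} (d : ι → ℕ)
    (W : ∀ i, Matrix (Fin (d i) × Fin (d i)) (Fin (d i) × Fin (d i)) ℂ) {i j : ι} (e : i = j) :
    mcast (congrArg d e) (congrArg d e) (W i) = W j := by
  subst e; rfl

end mcast

section gauge

variable {K : ℕ} (d : ZMod K → ℕ)
  (M : ∀ i : ZMod K,
    Matrix (Fin (d (i + 1)) × Fin (d (i + 1))) (Fin (d i) × Fin (d i)) ℂ)
  (W : ∀ i : ZMod K, (Matrix (Fin (d i) × Fin (d i)) (Fin (d i) × Fin (d i)) ℂ)ˣ)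

lemma pathProd_gauge (n : ℕ) :
    pathProd d (fun i => (W (i + 1)).val * M i * (W i)⁻¹.val) n =
      (W n).val * pathProd d M n * (W 0)⁻¹.val := by
  induction n with
  | zero =>
    simp only [pathProd]
    rw [← mcast_congr_index d (fun i => (W i).val) (Nat.cast_zero (R := ZMod K)).symm,
      mcast_mul_mcast, mul_one, ← mcast_mul, Units.mul_inv]
  | succ n ih =>
    simp only [pathProd]
    rw [ih, ← mcast_congr_index d (fun i => (W i).val)
      (Nat.cast_add_one (R := ZMod K) n).symm, mcast_mul_mcast, ← mcast_mul]
    simp only [Matrix.mul_assoc]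
    rw [← Matrix.mul_assoc (W (n : ZMod K))⁻¹.val, Units.inv_mul, Matrix.one_mul]

lemma pathOp_gauge :
    pathOp d (fun i => (W (i + 1)).val * M i * (W i)⁻¹.val) =
      (W 0).val * pathOp d M * (W 0)⁻¹.val := by
  rw [pathOp, pathProd_gauge, mcast_mul, ← mcast_mul_mcast,
    mcast_congr_index d (fun i => (W i).val) (ZMod.natCast_self K), pathOp]

end gauge

theorem stmt6_general {K : ℕ} (d : ZMod K → ℕ)
    (ρ : ∀ i : ZMod K,
      Matrix (Fin (d (i + 1)) × Fin (d i)) (Fin (d (i + 1)) × Fin (d i)) ℂ)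
    (V : ∀ i : ZMod K, Matrix (Fin (d i)) (Fin (d i)) ℂ)
    (hV : ∀ i, V i ∈ Matrix.unitaryGroup (Fin (d i)) ℂ) :
    (pathOp d (fun i => realign (PT1 (ρ i)))).charpoly =
      (pathOp d (fun i => realign (PT1
        ((V (i + 1) ⊗ₖ V i) * ρ i * (V (i + 1) ⊗ₖ V i)ᴴ)))).charpoly ∧
    (pathOp d (fun i => realign (PT1 (ρ i)))).trace =
      (pathOp d (fun i => realign (PT1
        ((V (i + 1) ⊗ₖ V i) * ρ i * (V (i + 1) ⊗ₖ V i)ᴴ)))).trace := by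
  let W : ∀ i : ZMod K, (Matrix (Fin (d i) × Fin (d i)) (Fin (d i) × Fin (d i)) ℂ)ˣ :=
    fun i => Unitary.toUnits ⟨V i ⊗ₖ (V i).map star,
      kronecker_mem_unitary (hV i) (map_star_mem_unitaryGroup_iff.mpr (hV i))⟩
  have hP : pathOp d (fun i => realign (PT1
        ((V (i + 1) ⊗ₖ V i) * ρ i * (V (i + 1) ⊗ₖ V i)ᴴ))) =
      (W 0).val * pathOp d (fun i => realign (PT1 (ρ i))) * (W 0)⁻¹.val := by
    rw [← pathOp_gauge]
    congr 1
    funext i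
    exact realign_PT1_kronecker_mul_mul_conjTranspose _ _ _ _ _
  rw [hP, trace_units_conj, coe_units_inv, charpoly_units_conj]
  exact ⟨rfl, rfl⟩

/-- the characteristic polynomial (hence trace and eigenvalues) of the
path operator is a local unitary invariant. -/
theorem stmt6 {K : ℕ} (hK : 2 ≤ K) (d : ZMod K → ℕ)
    (ρ : ∀ i : ZMod K,
      Matrix (Fin (d (i + 1)) × Fin (d i)) (Fin (d (i + 1)) × Fin (d i)) ℂ)
    (V : ∀ i : ZMod K, Matrix (Fin (d i)) (Fin (d i)) ℂ)
    (hV : ∀ i, V i ∈ Matrix.unitaryGroup (Fin (d i)) ℂ) :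
    (pathOp d (fun i => realign (PT1 (ρ i)))).charpoly =
      (pathOp d (fun i => realign (PT1
        ((V (i + 1) ⊗ₖ V i) * ρ i * (V (i + 1) ⊗ₖ V i)ᴴ)))).charpoly ∧
    (pathOp d (fun i => realign (PT1 (ρ i)))).trace =
      (pathOp d (fun i => realign (PT1
        ((V (i + 1) ⊗ₖ V i) * ρ i * (V (i + 1) ⊗ₖ V i)ᴴ)))).trace :=
  stmt6_general d ρ V hV
end
end

section
/- Let d₁, d₂ be natural numbers, let ρ₂₁ be any matrix on ℂ^{d₂} ⊗ ℂ^{d₁}, let V₁ be a unitary d₁ × d₁ complex matrix and V₂ a unitary d₂ × d₂ complex matrix, and set ρ̃₂₁ = (V₂ ⊗ V₁) · ρ₂₁ · (V₂ ⊗ V₁)†. Then the realignment without partial transpose satisfies R(ρ₂₁) = (V₂ ⊗ V₂*)† · R(ρ̃₂₁) · (V₁* ⊗ V₁), where V* denotes the entrywise complex conjugate. -/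
open Matrix Kronecker

noncomputable section

/-!
Realignment turns local operations on the two tensor factors into left and right
multiplications: `R((A ⊗ B) ρ (C ⊗ D)) = (A ⊗ Cᵀ) R(ρ) (Bᵀ ⊗ D)`. With `A = V₂`, `B = V₁`,
`C = V₂†`, `D = V₁†` the two outer factors are `V₂ ⊗ V₂*` and `(V₁* ⊗ V₁)†`, both unitary,
so they cancel against the factors in the claimed formula.
-/

theorem realign_kronecker_mul_mul_kronecker {d₂ d₁ : ℕ} (A C : Matrix (Fin d₂) (Fin d₂) ℂ)
    (B D : Matrix (Fin d₁) (Fin d₁) ℂ) (ρ : Matrix (Fin d₂ × Fin d₁) (Fin d₂ × Fin d₁) ℂ) :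
    realign ((A ⊗ₖ B) * ρ * (C ⊗ₖ D)) = (A ⊗ₖ Cᵀ) * realign ρ * (Bᵀ ⊗ₖ D) := by
  ext ⟨i, j⟩ ⟨α, β⟩
  simp only [realign, mul_apply, kroneckerMap_apply, transpose_apply, Fintype.sum_prod_type,
    Finset.sum_mul]
  rw [Finset.sum_comm]
  conv_rhs => rw [Finset.sum_comm]
  refine Finset.sum_congr rfl fun δ _ => ?_
  rw [Finset.sum_comm]
  conv_rhs => rw [Finset.sum_comm]; enter [2, k]; rw [Finset.sum_comm]
  refine Finset.sum_congr rfl fun k _ => Finset.sum_congr rfl fun l _ =>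
    Finset.sum_congr rfl fun γ _ => by ring

/-- transformation law of plain realignment (no partial transpose)
under local unitaries: R(ρ₂₁) = (V₂ ⊗ V₂*)† · R(ρ̃₂₁) · (V₁* ⊗ V₁). -/
theorem stmt7 {d₁ d₂ : ℕ}
    (ρ₂₁ : Matrix (Fin d₂ × Fin d₁) (Fin d₂ × Fin d₁) ℂ)
    (V₁ : Matrix (Fin d₁) (Fin d₁) ℂ) (V₂ : Matrix (Fin d₂) (Fin d₂) ℂ)
    (hV₁ : V₁ ∈ Matrix.unitaryGroup (Fin d₁) ℂ)
    (hV₂ : V₂ ∈ Matrix.unitaryGroup (Fin d₂) ℂ) :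
    realign ρ₂₁ =
      (V₂ ⊗ₖ V₂.map star)ᴴ *
        realign ((V₂ ⊗ₖ V₁) * ρ₂₁ * (V₂ ⊗ₖ V₁)ᴴ) *
        (V₁.map star ⊗ₖ V₁) := by
  have hW : (V₂ ⊗ₖ V₂.map star)ᴴ * (V₂ ⊗ₖ V₂.map star) = 1 :=
    (kronecker_mem_unitary hV₂ (map_star_mem_unitaryGroup_iff.mpr hV₂)).1
  have hX : (V₁.map star ⊗ₖ V₁)ᴴ * (V₁.map star ⊗ₖ V₁) = 1 :=
    (kronecker_mem_unitary (map_star_mem_unitaryGroup_iff.mpr hV₁) hV₁).1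
  have hR : realign ((V₂ ⊗ₖ V₁) * ρ₂₁ * (V₂ ⊗ₖ V₁)ᴴ) =
      (V₂ ⊗ₖ V₂.map star) * realign ρ₂₁ * (V₁.map star ⊗ₖ V₁)ᴴ := by
    rw [conjTranspose_kronecker, realign_kronecker_mul_mul_kronecker, conjTranspose_kronecker,
      ← transpose_conjTranspose V₁, conjTranspose_conjTranspose, conjTranspose_transpose]
  rw [hR, Matrix.mul_assoc, Matrix.mul_assoc, hX, Matrix.mul_one, ← Matrix.mul_assoc, hW,
    Matrix.one_mul]
end
end

section
/- Let d₁, d₂ be natural numbers, let ρ₂₁ be any matrix on ℂ^{d₂} ⊗ ℂ^{d₁}, let O₁ be a d₁ × d₁ complex matrix and O₂ a d₂ × d₂ complex matrix, each unitary with all entries real (i.e. real orthogonal), and set ρ̃₂₁ = (O₂ ⊗ O₁) · ρ₂₁ · (O₂ ⊗ O₁)†. Then R(ρ₂₁) = (O₂ ⊗ O₂)† · R(ρ̃₂₁) · (O₁ ⊗ O₁); that is, under local orthogonal transformations plain realignment transforms covariantly in the same way as the realigned partial transpose does under local unitaries. -/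
open Matrix Kronecker

noncomputable section

/-! Realignment turns a local conjugation `M ↦ (X ⊗ Y) M (Z ⊗ W)` into multiplication by
`X ⊗ Zᵀ` on the left and `Yᵀ ⊗ W` on the right. For a real orthogonal `O` one has
`(Oᴴ)ᵀ = O` and `Oᵀ = Oᴴ`, so `(O₂ ⊗ O₁) ρ (O₂ ⊗ O₁)ᴴ` realigns to
`(O₂ ⊗ O₂) R(ρ) (O₁ ⊗ O₁)ᴴ`, and unitarity of `O₂ ⊗ O₂` and `O₁ ⊗ O₁` undoes both factors. -/

theorem realign_kronecker_mul_mul_kronecker_s8 {d₁ d₂ : ℕ} (X Z : Matrix (Fin d₂) (Fin d₂) ℂ)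
    (Y W : Matrix (Fin d₁) (Fin d₁) ℂ) (M : Matrix (Fin d₂ × Fin d₁) (Fin d₂ × Fin d₁) ℂ) :
    realign ((X ⊗ₖ Y) * M * (Z ⊗ₖ W)) = (X ⊗ₖ Zᵀ) * realign M * (Yᵀ ⊗ₖ W) := by
  ext ⟨i, j⟩ ⟨α, β⟩
  simp only [realign, mul_apply, kroneckerMap_apply, transpose_apply, Finset.sum_mul]
  rw [← Finset.sum_product', ← Finset.sum_product', Finset.univ_product_univ,
    Finset.univ_product_univ]
  refine Fintype.sum_equiv
    ⟨fun x => ((x.2.2, x.1.2), (x.2.1, x.1.1)), fun y => ((y.2.2, y.1.2), (y.2.1, y.1.1)),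
      fun _ => rfl, fun _ => rfl⟩ _ _ ?_
  rintro ⟨⟨k, γ⟩, l, δ⟩
  dsimp only [Equiv.coe_fn_mk]
  ring

theorem conjTranspose_eq_transpose_of_im_eq_zero {m n : Type*} {A : Matrix m n ℂ}
    (hA : ∀ i j, (A i j).im = 0) : Aᴴ = Aᵀ := by
  ext i j
  exact Complex.conj_eq_iff_im.mpr (hA j i)

/-- under local real orthogonal transformations, plain realignment
transforms covariantly: R(ρ₂₁) = (O₂ ⊗ O₂)† · R(ρ̃₂₁) · (O₁ ⊗ O₁). -/
theorem stmt8 {d₁ d₂ : ℕ}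
    (ρ₂₁ : Matrix (Fin d₂ × Fin d₁) (Fin d₂ × Fin d₁) ℂ)
    (O₁ : Matrix (Fin d₁) (Fin d₁) ℂ) (O₂ : Matrix (Fin d₂) (Fin d₂) ℂ)
    (hO₁ : O₁ ∈ Matrix.unitaryGroup (Fin d₁) ℂ)
    (hO₂ : O₂ ∈ Matrix.unitaryGroup (Fin d₂) ℂ)
    (hO₁real : ∀ i j, (O₁ i j).im = 0)
    (hO₂real : ∀ i j, (O₂ i j).im = 0) :
    realign ρ₂₁ =
      (O₂ ⊗ₖ O₂)ᴴ *
        realign ((O₂ ⊗ₖ O₁) * ρ₂₁ * (O₂ ⊗ₖ O₁)ᴴ) *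
        (O₁ ⊗ₖ O₁) := by
  have hO₁t : O₁ᵀ = O₁ᴴ := (conjTranspose_eq_transpose_of_im_eq_zero hO₁real).symm
  have hO₂ht : O₂ᴴᵀ = O₂ := by
    rw [conjTranspose_eq_transpose_of_im_eq_zero hO₂real, transpose_transpose]
  have hU₁ : (O₁ ⊗ₖ O₁)ᴴ * (O₁ ⊗ₖ O₁) = 1 :=
    Unitary.star_mul_self_of_mem (kronecker_mem_unitary hO₁ hO₁)
  have hU₂ : (O₂ ⊗ₖ O₂)ᴴ * (O₂ ⊗ₖ O₂) = 1 :=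
    Unitary.star_mul_self_of_mem (kronecker_mem_unitary hO₂ hO₂)
  rw [conjTranspose_kronecker O₂ O₁, realign_kronecker_mul_mul_kronecker_s8, hO₂ht, hO₁t,
    ← conjTranspose_kronecker]
  simp only [Matrix.mul_assoc, hU₁, Matrix.mul_one]
  rw [← Matrix.mul_assoc, hU₂, Matrix.one_mul]
end
end

section
/- Consider a closed path on K subsystems (K ≥ 2) with local dimensions d : ZMod K → ℕ and matrices ρ_i on ℂ^{d(i+1)} ⊗ ℂ^{d(i)}, each ρ_i Hermitian, with path operator P. Then S_{d(0)} · P · S_{d(0)} = P*, where * denotes the entrywise complex conjugate; that is, P is conjugated into its complex conjugate by the SWAP operator on ℂ^{d(0)} ⊗ ℂ^{d(0)}. -/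
open Matrix Kronecker

noncomputable section

/-!
Conjugating the realigned partial transpose of ρ by SWAP on both sides exchanges the roles
of rows and columns of ρ, i.e. turns `realign (PT1 ρ)` into `realign (PT1 ρᴴ)`, which for
Hermitian ρ is the entrywise conjugate. Since `S * S = 1`, this property of each link
survives multiplication, hence passes to the path operator.
-/

section SwapConjugation

variable {m n k : ℕ}

def IsSwapReal (A : Matrix (Fin m × Fin m) (Fin n × Fin n) ℂ) : Prop :=
  swapOp m * A * swapOp n = A.map star

lemma swapOp_mul (A : Matrix (Fin m × Fin m) (Fin n × Fin n) ℂ) :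
    swapOp m * A = fun p q => A p.swap q := by
  ext ⟨a, b⟩ q
  simp [mul_apply, swapOp, Fintype.sum_prod_type, ite_and]

lemma mul_swapOp (A : Matrix (Fin m × Fin m) (Fin n × Fin n) ℂ) :
    A * swapOp n = fun p q => A p q.swap := by
  ext p ⟨a, b⟩
  simp [mul_apply, swapOp, Fintype.sum_prod_type, ite_and, eq_comm]

lemma swapOp_mul_self (m : ℕ) : swapOp m * swapOp m = 1 := by
  rw [swapOp_mul]
  ext ⟨a, b⟩ ⟨c, e⟩
  simp [swapOp, one_apply, Prod.ext_iff, and_comm]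

lemma isSwapReal_one : IsSwapReal (1 : Matrix (Fin m × Fin m) (Fin m × Fin m) ℂ) := by
  rw [IsSwapReal, Matrix.mul_one, swapOp_mul_self, Matrix.map_one _ (star_zero ℂ) (star_one ℂ)]

lemma IsSwapReal.mul {A : Matrix (Fin m × Fin m) (Fin n × Fin n) ℂ}
    {B : Matrix (Fin n × Fin n) (Fin k × Fin k) ℂ} (hA : IsSwapReal A) (hB : IsSwapReal B) :
    IsSwapReal (A * B) := by
  have hmap : (A * B).map star = A.map star * B.map star := Matrix.map_mul (f := starRingEnd ℂ)
  calc swapOp m * (A * B) * swapOp k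
      = (swapOp m * A * swapOp n) * (swapOp n * B * swapOp k) := by
        simp only [Matrix.mul_assoc, ← Matrix.mul_assoc (swapOp n) (swapOp n),
          swapOp_mul_self, Matrix.one_mul]
    _ = (A * B).map star := by rw [hA, hB, hmap]

lemma Matrix.IsHermitian.isSwapReal_realign_PT1 {ρ : Matrix (Fin m × Fin n) (Fin m × Fin n) ℂ}
    (hρ : ρ.IsHermitian) : IsSwapReal (realign (PT1 ρ)) := by
  rw [IsSwapReal, mul_swapOp, swapOp_mul]
  ext p q
  exact (hρ.apply _ _).symm

lemma IsSwapReal.mcast {m' n' : ℕ} (hm : m = m') (hn : n = n')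
    {A : Matrix (Fin m × Fin m) (Fin n × Fin n) ℂ} (hA : IsSwapReal A) :
    IsSwapReal (mcast hm hn A) := by
  subst hm hn
  exact hA

end SwapConjugation

lemma isSwapReal_pathProd {K : ℕ} {d : ZMod K → ℕ}
    {M : ∀ i : ZMod K,
      Matrix (Fin (d (i + 1)) × Fin (d (i + 1))) (Fin (d i) × Fin (d i)) ℂ}
    (hM : ∀ i, IsSwapReal (M i)) (n : ℕ) : IsSwapReal (pathProd d M n) := by
  induction n with
  | zero => exact isSwapReal_one.mcast _ _
  | succ n ih => exact ((hM n).mul ih).mcast _ _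

theorem stmt11_general {K : ℕ} (d : ZMod K → ℕ)
    (ρ : ∀ i : ZMod K,
      Matrix (Fin (d (i + 1)) × Fin (d i)) (Fin (d (i + 1)) × Fin (d i)) ℂ)
    (hρ : ∀ i, (ρ i).IsHermitian) :
    swapOp (d 0) * pathOp d (fun i => realign (PT1 (ρ i))) * swapOp (d 0) =
      (pathOp d (fun i => realign (PT1 (ρ i)))).map star :=
  (isSwapReal_pathProd (fun i => (hρ i).isSwapReal_realign_PT1) K).mcast _ _

/-- for Hermitian two-body matrices, the path operator is conjugated
into its complex conjugate by the SWAP operator: S_{d(0)} · P · S_{d(0)} = P*. -/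
theorem stmt11 {K : ℕ} (hK : 2 ≤ K) (d : ZMod K → ℕ)
    (ρ : ∀ i : ZMod K,
      Matrix (Fin (d (i + 1)) × Fin (d i)) (Fin (d (i + 1)) × Fin (d i)) ℂ)
    (hρ : ∀ i, (ρ i).IsHermitian) :
    swapOp (d 0) * pathOp d (fun i => realign (PT1 (ρ i))) * swapOp (d 0) =
      (pathOp d (fun i => realign (PT1 (ρ i)))).map star :=
  stmt11_general d ρ hρ
end
end

section
/- (Proposition 2, non-retracing part.) Consider a closed path on K subsystems (K ≥ 2) with local dimensions d : ZMod K → ℕ and matrices ρ_i on ℂ^{d(i+1)} ⊗ ℂ^{d(i)}, each ρ_i Hermitian, with path operator P. Then every coefficient of the characteristic polynomial of P is real; equivalently, the spectrum of P is closed under complex conjugation, so each eigenvalue of P is either real or occurs together with its complex conjugate. -/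
open Matrix Kronecker

noncomputable section

/-! Hermiticity of `ρ` says that complex conjugation acts on each link matrix `R(ρ^T₁)` as
conjugation by the SWAP operators on its row and column spaces. In the product along the path the
inner SWAPs cancel, so the entrywise conjugate of `P` is `SWAP · P · SWAP`, which is similar to `P`.
Hence the characteristic polynomial of `P` is fixed by conjugation of its coefficients. -/

open Polynomial

section SwapOp

variable {d : ℕ} {n : Type*}

lemma swapOp_mul_apply (A : Matrix (Fin d × Fin d) n ℂ) (p : Fin d × Fin d) (q : n) :
    (swapOp d * A) p q = A (p.2, p.1) q := by
  simp [mul_apply, swapOp, Fintype.sum_prod_type, ite_and]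

lemma mul_swapOp_apply (A : Matrix n (Fin d × Fin d) ℂ) (p : n) (q : Fin d × Fin d) :
    (A * swapOp d) p q = A p (q.2, q.1) := by
  simp [mul_apply, swapOp, Fintype.sum_prod_type, ite_and]

lemma swapOp_mul_swapOp (d : ℕ) : swapOp d * swapOp d = 1 := by
  ext p q
  rw [swapOp_mul_apply]
  simp [swapOp, one_apply, Prod.ext_iff, and_comm]

lemma charpoly_swapOp_mul_mul_swapOp (A : Matrix (Fin d × Fin d) (Fin d × Fin d) ℂ) :
    (swapOp d * A * swapOp d).charpoly = A.charpoly := by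
  simpa only [inv_eq_left_inv (swapOp_mul_swapOp d)] using
    charpoly_units_conj ⟨swapOp d, swapOp d, swapOp_mul_swapOp d, swapOp_mul_swapOp d⟩ A

lemma swapOp_mul_mul_swapOp_mul {a b c : ℕ} (A : Matrix (Fin c × Fin c) (Fin b × Fin b) ℂ)
    (B : Matrix (Fin b × Fin b) (Fin a × Fin a) ℂ) :
    swapOp c * A * swapOp b * (swapOp b * B * swapOp a) = swapOp c * (A * B) * swapOp a := by
  simp only [Matrix.mul_assoc]
  rw [← Matrix.mul_assoc (swapOp b) (swapOp b), swapOp_mul_swapOp, Matrix.one_mul]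

end SwapOp

section Mcast

variable {m n m' n' : ℕ} (hm : m = m') (hn : n = n')
  (A : Matrix (Fin m × Fin m) (Fin n × Fin n) ℂ)

lemma mcast_map (f : ℂ → ℂ) : (mcast hm hn A).map f = mcast hm hn (A.map f) := by
  subst hm hn; rfl

lemma swapOp_mul_mcast_mul_swapOp :
    swapOp m' * mcast hm hn A * swapOp n' = mcast hm hn (swapOp m * A * swapOp n) := by
  subst hm hn; rfl

end Mcast

lemma realign_PT1_map_conj {d₂ d₁ : ℕ} {ρ : Matrix (Fin d₂ × Fin d₁) (Fin d₂ × Fin d₁) ℂ}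
    (hρ : ρ.IsHermitian) :
    (realign (PT1 ρ)).map (starRingEnd ℂ) = swapOp d₂ * realign (PT1 ρ) * swapOp d₁ := by
  ext p q
  rw [mul_swapOp_apply, swapOp_mul_apply]
  exact hρ.apply _ _

section Path

variable {K : ℕ} (d : ZMod K → ℕ)
  {M : ∀ i : ZMod K, Matrix (Fin (d (i + 1)) × Fin (d (i + 1))) (Fin (d i) × Fin (d i)) ℂ}

lemma pathProd_map_conj
    (hM : ∀ i, (M i).map (starRingEnd ℂ) = swapOp (d (i + 1)) * M i * swapOp (d i)) :
    ∀ n : ℕ, (pathProd d M n).map (starRingEnd ℂ)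
      = swapOp (d (n : ZMod K)) * pathProd d M n * swapOp (d 0)
  | 0 => by
    rw [pathProd, mcast_map, swapOp_mul_mcast_mul_swapOp,
      Matrix.map_one _ (map_zero _) (map_one _), Matrix.mul_one, swapOp_mul_swapOp]
  | n + 1 => by
    rw [pathProd, mcast_map, swapOp_mul_mcast_mul_swapOp, Matrix.map_mul, hM,
      pathProd_map_conj hM n, swapOp_mul_mul_swapOp_mul]

lemma pathOp_map_conj
    (hM : ∀ i, (M i).map (starRingEnd ℂ) = swapOp (d (i + 1)) * M i * swapOp (d i)) :
    (pathOp d M).map (starRingEnd ℂ) = swapOp (d 0) * pathOp d M * swapOp (d 0) := by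
  rw [pathOp, mcast_map, swapOp_mul_mcast_mul_swapOp, pathProd_map_conj d hM K]

end Path

theorem stmt12_general {K : ℕ} (d : ZMod K → ℕ)
    (ρ : ∀ i : ZMod K,
      Matrix (Fin (d (i + 1)) × Fin (d i)) (Fin (d (i + 1)) × Fin (d i)) ℂ)
    (hρ : ∀ i, (ρ i).IsHermitian) :
    (∀ k : ℕ,
      ((pathOp d (fun i => realign (PT1 (ρ i)))).charpoly.coeff k).im = 0) ∧
    (∀ μ : ℂ, μ ∈ spectrum ℂ (pathOp d (fun i => realign (PT1 (ρ i)))) →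
      (starRingEnd ℂ) μ ∈ spectrum ℂ (pathOp d (fun i => realign (PT1 (ρ i))))) := by
  set P := pathOp d (fun i => realign (PT1 (ρ i)))
  have hP : P.map (starRingEnd ℂ) = swapOp (d 0) * P * swapOp (d 0) :=
    pathOp_map_conj d fun i => realign_PT1_map_conj (hρ i)
  have hχ : P.charpoly.map (starRingEnd ℂ) = P.charpoly := by
    rw [← charpoly_map, hP, charpoly_swapOp_mul_mul_swapOp]
  refine ⟨fun k => Complex.conj_eq_iff_im.mp ?_, fun μ hμ => ?_⟩
  · rw [← coeff_map, hχ]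
  · rw [mem_spectrum_iff_isRoot_charpoly] at hμ ⊢
    exact hχ ▸ hμ.map

/-- Proposition 2, non-retracing part: for Hermitian two-body
matrices, the characteristic polynomial of the path operator has real
coefficients, and its spectrum is closed under complex conjugation. -/
theorem stmt12 {K : ℕ} (hK : 2 ≤ K) (d : ZMod K → ℕ)
    (ρ : ∀ i : ZMod K,
      Matrix (Fin (d (i + 1)) × Fin (d i)) (Fin (d (i + 1)) × Fin (d i)) ℂ)
    (hρ : ∀ i, (ρ i).IsHermitian) :
    (∀ k : ℕ,
      ((pathOp d (fun i => realign (PT1 (ρ i)))).charpoly.coeff k).im = 0) ∧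
    (∀ μ : ℂ, μ ∈ spectrum ℂ (pathOp d (fun i => realign (PT1 (ρ i)))) →
      (starRingEnd ℂ) μ ∈ spectrum ℂ (pathOp d (fun i => realign (PT1 (ρ i))))) :=
  stmt12_general d ρ hρ
end
end

section
/- (Proposition 2, retracing part.) Let L ≥ 2, let d : Fin L → ℕ be local dimensions, and for each i with i+1 < L let ρ_i be a Hermitian matrix on ℂ^{d(i+1)} ⊗ ℂ^{d(i)}, with swap reindexing ρ̂_i on ℂ^{d(i)} ⊗ ℂ^{d(i+1)}. Set M_i = R(ρ_i^T₁) (forward links) and N_i = R(ρ̂_i^T₁) (backward links). Then the fully retracing path operator P = N₀ · N₁ ⋯ N_{L-2} · M_{L-2} ⋯ M₁ · M₀ is a positive semidefinite d(0)² × d(0)² matrix. -/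
open Matrix Kronecker
open scoped ComplexOrder

noncomputable section

/-- Forward partial products M_{n-1} ⋯ M₁ · M₀ along a (non-closed) path. -/
def fwd {L : ℕ} (h0 : 0 < L) (d : Fin L → ℕ)
    (M : ∀ i : ℕ, ∀ h : i + 1 < L,
      Matrix (Fin (d ⟨i + 1, h⟩) × Fin (d ⟨i + 1, h⟩))
        (Fin (d ⟨i, Nat.lt_of_succ_lt h⟩) × Fin (d ⟨i, Nat.lt_of_succ_lt h⟩)) ℂ) :
    ∀ n : ℕ, ∀ hn : n < L,
      Matrix (Fin (d ⟨n, hn⟩) × Fin (d ⟨n, hn⟩)) (Fin (d ⟨0, h0⟩) × Fin (d ⟨0, h0⟩)) ℂ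
  | 0, _ => 1
  | n + 1, hn => M n hn * fwd h0 d M n (Nat.lt_of_succ_lt hn)

/-- Backward partial products N₀ · N₁ ⋯ N_{n-1} along a (non-closed) path. -/
def bwd {L : ℕ} (h0 : 0 < L) (d : Fin L → ℕ)
    (N : ∀ i : ℕ, ∀ h : i + 1 < L,
      Matrix (Fin (d ⟨i, Nat.lt_of_succ_lt h⟩) × Fin (d ⟨i, Nat.lt_of_succ_lt h⟩))
        (Fin (d ⟨i + 1, h⟩) × Fin (d ⟨i + 1, h⟩)) ℂ) :
    ∀ n : ℕ, ∀ hn : n < L,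
      Matrix (Fin (d ⟨0, h0⟩) × Fin (d ⟨0, h0⟩)) (Fin (d ⟨n, hn⟩) × Fin (d ⟨n, hn⟩)) ℂ
  | 0, _ => 1
  | n + 1, hn => bwd h0 d N n (Nat.lt_of_succ_lt hn) * N n hn

/-! Hermiticity makes every backward link the adjoint of the forward link across the same bond,
so the retracing operator is `Fᴴ * F` for the forward product `F = M_{L-2} ⋯ M₀`. -/

lemma realign_PT1_swapRe {d₂ d₁ : ℕ} (ρ : Matrix (Fin d₂ × Fin d₁) (Fin d₂ × Fin d₁) ℂ) :
    realign (PT1 (swapRe ρ)) = (realign (PT1 ρᴴ))ᴴ := by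
  ext ⟨α, β⟩ ⟨i, j⟩
  simp [realign, PT1, swapRe, conjTranspose_apply]

lemma bwd_conjTranspose {L : ℕ} (h0 : 0 < L) (d : Fin L → ℕ)
    (M : ∀ i : ℕ, ∀ h : i + 1 < L,
      Matrix (Fin (d ⟨i + 1, h⟩) × Fin (d ⟨i + 1, h⟩))
        (Fin (d ⟨i, Nat.lt_of_succ_lt h⟩) × Fin (d ⟨i, Nat.lt_of_succ_lt h⟩)) ℂ) :
    ∀ n : ℕ, ∀ hn : n < L,
      bwd h0 d (fun i h => (M i h)ᴴ) n hn = (fwd h0 d M n hn)ᴴ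
  | 0, _ => by simp [bwd, fwd]
  | n + 1, hn => by
      rw [bwd, fwd, conjTranspose_mul, bwd_conjTranspose h0 d M n (Nat.lt_of_succ_lt hn)]

/-- Proposition 2, retracing part: the fully retracing path operator
P = N₀ ⋯ N_{L-2} · M_{L-2} ⋯ M₀ built from Hermitian two-body matrices is
positive semidefinite. -/
theorem stmt13 {L : ℕ} (hL : 2 ≤ L) (d : Fin L → ℕ)
    (ρ : ∀ i : ℕ, ∀ h : i + 1 < L,
      Matrix (Fin (d ⟨i + 1, h⟩) × Fin (d ⟨i, Nat.lt_of_succ_lt h⟩))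
        (Fin (d ⟨i + 1, h⟩) × Fin (d ⟨i, Nat.lt_of_succ_lt h⟩)) ℂ)
    (hρ : ∀ i h, (ρ i h).IsHermitian) :
    Matrix.PosSemidef
      (bwd (lt_of_lt_of_le two_pos hL) d
          (fun i h => realign (PT1 (swapRe (ρ i h)))) (L - 1)
          (Nat.sub_lt_self one_pos (le_trans one_le_two hL)) *
        fwd (lt_of_lt_of_le two_pos hL) d
          (fun i h => realign (PT1 (ρ i h))) (L - 1)
          (Nat.sub_lt_self one_pos (le_trans one_le_two hL))) := by
  have hN : (fun i h => realign (PT1 (swapRe (ρ i h))))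
      = fun i h => (realign (PT1 (ρ i h)))ᴴ := by
    funext i h
    rw [realign_PT1_swapRe, (hρ i h).eq]
  rw [hN, bwd_conjTranspose]
  exact posSemidef_conjTranspose_mul_self _
end
end

section
/- Let ψ : Fin 2 × Fin 2 → ℂ be a unit vector (a pure state of two qubits), let ρ₁₂ be the rank-one projection with entries (ρ₁₂)_{u,v} = ψ_u · conj(ψ_v), and let ρ₂₁ be its swap reindexing. Let τ = |Σ_{i,j,k,l} ψ_{(i,j)} (σ₂)_{i k} (σ₂)_{j l} ψ_{(k,l)}|² be the two-tangle (the square of the concurrence). Then det[R(ρ₁₂^T₁) · R(ρ₂₁^T₁)] = (τ/4)⁴. -/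
/-! For ρ = ψψ† with amplitude matrix Ψ = (ψ_{iα}), the realigned partial transpose has entries
ψ_{iβ} conj ψ_{jα}: it is Ψ ⊗ Ψ̄ with its column factors swapped, so its determinant is
± (det Ψ · conj det Ψ)^d. Swapping the subsystems replaces Ψ by Ψᵀ, and the two signs (that of
the swap permutation of Fin d × Fin d) cancel in the product, leaving |det Ψ|^{4d}. For two
qubits, ψᵀ(σ₂ ⊗ σ₂)ψ = -2 det Ψ, so τ = 4 |det Ψ|², which gives (τ/4)⁴. -/

open Matrix Kronecker

noncomputable section

section PureState

variable {d₂ d₁ : ℕ}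

def amplitudeMatrix (ψ : Fin d₂ × Fin d₁ → ℂ) : Matrix (Fin d₂) (Fin d₁) ℂ :=
  Matrix.of fun i α => ψ (i, α)

theorem realign_PT1_vecMulVec (ψ : Fin d₂ × Fin d₁ → ℂ) :
    realign (PT1 (vecMulVec ψ (star ψ))) =
      (amplitudeMatrix ψ ⊗ₖ (amplitudeMatrix ψ).map (starRingEnd ℂ)).submatrix id Prod.swap :=
  rfl

theorem swapRe_vecMulVec_star (ψ : Fin d₂ × Fin d₁ → ℂ) :
    swapRe (vecMulVec ψ (star ψ)) = vecMulVec (ψ ∘ Prod.swap) (star (ψ ∘ Prod.swap)) :=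
  rfl

theorem amplitudeMatrix_comp_swap (ψ : Fin d₂ × Fin d₁ → ℂ) :
    amplitudeMatrix (ψ ∘ Prod.swap) = (amplitudeMatrix ψ)ᵀ :=
  rfl

theorem det_realign_PT1_vecMulVec {d : ℕ} (ψ : Fin d × Fin d → ℂ) :
    (realign (PT1 (vecMulVec ψ (star ψ)))).det =
      Equiv.Perm.sign (Equiv.prodComm (Fin d) (Fin d)) *
        ((amplitudeMatrix ψ).det * starRingEnd ℂ (amplitudeMatrix ψ).det) ^ d := by
  rw [realign_PT1_vecMulVec, ← Equiv.coe_prodComm, det_permute', det_kronecker,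
    RingHom.map_det, Fintype.card_fin, mul_pow]
  rfl

theorem det_realign_PT1_mul_realign_PT1_swapRe {d : ℕ} (ψ : Fin d × Fin d → ℂ) :
    (realign (PT1 (vecMulVec ψ (star ψ))) *
        realign (PT1 (swapRe (vecMulVec ψ (star ψ))))).det =
      ((amplitudeMatrix ψ).det * starRingEnd ℂ (amplitudeMatrix ψ).det) ^ (2 * d) := by
  rw [det_mul, swapRe_vecMulVec_star, det_realign_PT1_vecMulVec,
    det_realign_PT1_vecMulVec, amplitudeMatrix_comp_swap, det_transpose, mul_mul_mul_comm,
    ← Int.cast_mul, ← Units.val_mul, Int.units_mul_self, Units.val_one, Int.cast_one, one_mul,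
    ← pow_add, two_mul]

theorem sum_pauli_two_mul_pauli_two (ψ : Fin 2 × Fin 2 → ℂ) :
    ∑ i : Fin 2, ∑ j : Fin 2, ∑ k : Fin 2, ∑ l : Fin 2,
      ψ (i, j) * pauli 2 i k * pauli 2 j l * ψ (k, l) = -2 * (amplitudeMatrix ψ).det := by
  simp only [pauli, of_apply, cons_val', cons_val_fin_one, Fin.sum_univ_two, Fin.isValue,
    cons_val_zero, cons_val_one, mul_zero, zero_mul, mul_neg, neg_mul, zero_add, add_zero, neg_zero,
    neg_neg, amplitudeMatrix, det_fin_two]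
  linear_combination (2 * (ψ (0,0) * ψ (1,1) - ψ (0,1) * ψ (1,0))) * Complex.I_sq

end PureState

theorem stmt14_general (ψ : Fin 2 × Fin 2 → ℂ)
    (ρ₁₂ : Matrix (Fin 2 × Fin 2) (Fin 2 × Fin 2) ℂ)
    (hρ : ∀ u v, ρ₁₂ u v = ψ u * (starRingEnd ℂ) (ψ v))
    (τ : ℝ)
    (hτ : τ = ‖∑ i : Fin 2, ∑ j : Fin 2, ∑ k : Fin 2, ∑ l : Fin 2,
      ψ (i, j) * pauli 2 i k * pauli 2 j l * ψ (k, l)‖ ^ 2) :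
    (realign (PT1 ρ₁₂) * realign (PT1 (swapRe ρ₁₂))).det = ((τ : ℂ) / 4) ^ 4 := by
  have hρ_pure : ρ₁₂ = vecMulVec ψ (star ψ) := Matrix.ext hρ
  have hτ_det :
      (τ : ℂ) = 4 * ((amplitudeMatrix ψ).det * starRingEnd ℂ (amplitudeMatrix ψ).det) := by
    rw [hτ, sum_pauli_two_mul_pauli_two, Complex.sq_norm, ← Complex.mul_conj, map_mul, map_neg,
      map_ofNat]
    ring
  rw [hρ_pure, det_realign_PT1_mul_realign_PT1_swapRe, hτ_det]
  ring

/-- for a two-qubit pure state ψ with density matrix ρ₁₂,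
det[R(ρ₁₂^T₁)·R(ρ₂₁^T₁)] = (τ/4)⁴ where τ is the two-tangle. -/
theorem stmt14 (ψ : Fin 2 × Fin 2 → ℂ)
    (hψ : ∑ u : Fin 2 × Fin 2, ‖ψ u‖ ^ 2 = 1)
    (ρ₁₂ : Matrix (Fin 2 × Fin 2) (Fin 2 × Fin 2) ℂ)
    (hρ : ∀ u v, ρ₁₂ u v = ψ u * (starRingEnd ℂ) (ψ v))
    (τ : ℝ)
    (hτ : τ = ‖∑ i : Fin 2, ∑ j : Fin 2, ∑ k : Fin 2, ∑ l : Fin 2,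
      ψ (i, j) * pauli 2 i k * pauli 2 j l * ψ (k, l)‖ ^ 2) :
    (realign (PT1 ρ₁₂) * realign (PT1 (swapRe ρ₁₂))).det = ((τ : ℂ) / 4) ^ 4 :=
  stmt14_general ψ ρ₁₂ hρ τ hτ
end
end

section
/- Let d₁, d₂, d₃ be natural numbers, let φ : Fin d₁ × Fin d₂ → ℂ and χ : Fin d₃ → ℂ be unit vectors, and let ψ = φ ⊗ χ be the biseparable tripartite pure state ψ_{(i,j,k)} = φ_{(i,j)} · χ_k, with global density matrix ρ the rank-one projection onto ψ. Let ρ₁₂, ρ₂₃, ρ₁₃ be the two-party reduced density matrices of ρ (obtained by partial trace over the remaining subsystem), let ρ₂₁, ρ₃₂ be the swap reindexings of ρ₁₂, ρ₂₃ respectively, and form the path operator P = R(ρ₁₃^T₁) · R(ρ₃₂^T₁) · R(ρ₂₁^T₁) on ℂ^{d₁²}. Then for every natural number n ≥ 1, tr(Pⁿ) = (tr[(ρ₁₂^T₁)³])ⁿ; in particular P has at most one nonzero eigenvalue, equal to tr[(ρ₁₂^T₁)³]. -/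
/-!
Since `χ` is a unit vector, `ρ₁₂` is the pure state of `φ`, while `ρ₁₃` and `ρ₂₃` are Kronecker
products of `χχ*` with the one-party marginals `τ = ΦΦᴴ` and `(ΦᴴΦ)ᵀ` of `φ`, where `Φ` is the
amplitude matrix of `φ`. Realignment turns the partial transpose of a Kronecker product into a
rank-one matrix, and the product of the three factors collapses to the rank-one matrix
`P = vec τᵀ (vec τ²)ᵀ`, so that `P² = tr(τ³) P`. On the other side, the partial transpose of a pure
state is a Kronecker product followed by a swap of the column factors, and its cube has trace
`tr((ΦΦᴴ)³) = tr(τ³)`.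
-/

open Matrix Kronecker

noncomputable section

open Polynomial in
theorem spectrum_subset_of_mul_self_eq_smul {𝕜 A : Type*} [Field 𝕜] [Ring A] [Algebra 𝕜 A]
    {a : A} {c : 𝕜} (h : a * a = c • a) : spectrum 𝕜 a ⊆ {0, c} := by
  nontriviality A
  refine (Set.image_subset_iff.mp (spectrum.subset_polynomial_aeval a (X * (X - C c)))).trans
    fun μ hμ => ?_
  have : aeval a (X * (X - C c)) = 0 := by
    simp [mul_sub, h, Algebra.smul_def]
  simp only [Set.mem_preimage, this, spectrum.zero_eq, Set.mem_singleton_iff, eval_mul, eval_X,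
    eval_sub, eval_C, mul_eq_zero, sub_eq_zero] at hμ
  simpa using hμ

namespace Matrix

variable {R : Type*} {l m n p q : Type*}

theorem vecMulVec_pow_succ [CommSemiring R] [Fintype n] [DecidableEq n] (u v : n → R) (k : ℕ) :
    vecMulVec u v ^ (k + 1) = (v ⬝ᵥ u) ^ k • vecMulVec u v := by
  induction k with
  | zero => simp
  | succ k ih =>
    rw [pow_succ, ih, smul_mul_assoc, vecMulVec_mul_vecMulVec, vecMulVec_smul, smul_smul, pow_succ]

theorem trace_vecMulVec_pow [CommSemiring R] [Fintype n] [DecidableEq n] (u v : n → R) {k : ℕ}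
    (hk : k ≠ 0) : (vecMulVec u v ^ k).trace = (v ⬝ᵥ u) ^ k := by
  obtain ⟨k, rfl⟩ := Nat.exists_eq_succ_of_ne_zero hk
  rw [vecMulVec_pow_succ, trace_smul, trace_vecMulVec, dotProduct_comm, smul_eq_mul, pow_succ]

theorem kronecker_submatrix_swap_mul [CommSemiring R] [Fintype m] [Fintype n]
    (A : Matrix l n R) (B : Matrix p m R) (C : Matrix m q R) (D : Matrix n l R) :
    (A ⊗ₖ B).submatrix id Prod.swap * (C ⊗ₖ D).submatrix id Prod.swap = (A * D) ⊗ₖ (B * C) := by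
  ext ⟨i, j⟩ ⟨i', j'⟩
  simp only [mul_apply, submatrix_apply, kroneckerMap_apply, id, Prod.fst_swap, Prod.snd_swap,
    Fintype.sum_prod_type, Finset.sum_mul_sum]
  rw [Finset.sum_comm]
  exact Finset.sum_congr rfl fun _ _ => Finset.sum_congr rfl fun _ _ => by ring

theorem trace_kronecker_submatrix_swap [AddCommMonoid R] [Mul R] [Fintype m] [Fintype n]
    (A : Matrix m n R) (B : Matrix n m R) :
    ((A ⊗ₖ B).submatrix id Prod.swap).trace = (A * B).trace := by
  simp [trace, mul_apply, Fintype.sum_prod_type]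

theorem trace_kronecker_mul_kronecker_submatrix_swap [CommSemiring R] [Fintype m] [Fintype n]
    (X : Matrix m m R) (Y : Matrix n n R) (A : Matrix m n R) (B : Matrix n m R) :
    ((X ⊗ₖ Y) * (A ⊗ₖ B).submatrix id Prod.swap).trace = (X * A * Y * B).trace := by
  have := submatrix_mul_equiv (X ⊗ₖ Y) (A ⊗ₖ B) (Equiv.refl _) (Equiv.refl _) (Equiv.prodComm m n)
  simp only [Equiv.coe_refl, submatrix_id_id, Equiv.coe_prodComm] at this
  rw [this, ← mul_kronecker_mul, trace_kronecker_submatrix_swap, ← Matrix.mul_assoc]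

theorem vec_vecMul_kronecker_submatrix_swap [CommSemiring R] [Fintype m] [Fintype n]
    (X : Matrix n n R) (A : Matrix m n R) (B : Matrix n m R) :
    vec X ᵥ* (Aᵀ ⊗ₖ B).submatrix id Prod.swap = vec (A * Xᵀ * B) := by
  change vec X ᵥ* (Aᵀ ⊗ₖ B).submatrix (Equiv.refl _) Prod.swap = _
  rw [submatrix_vecMul_equiv, Equiv.refl_symm, Equiv.coe_refl, Function.comp_id,
    vec_vecMul_kronecker, ← vec_transpose, transpose_mul, transpose_mul, transpose_transpose,
    transpose_transpose, Matrix.mul_assoc]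

theorem vec_vecMulVec_dotProduct_vec_transpose [CommSemiring R] [Fintype n] (u v : n → R) :
    vec (vecMulVec u v) ⬝ᵥ vec (vecMulVec u v)ᵀ = (u ⬝ᵥ v) ^ 2 := by
  rw [vec_dotProduct_vec, transpose_vecMulVec, vecMulVec_mul_vecMulVec, trace_vecMulVec,
    dotProduct_smul, smul_eq_mul, dotProduct_comm v u, sq]

end Matrix

theorem dotProduct_star_self_eq_one {n : Type*} [Fintype n] {v : n → ℂ}
    (hv : ∑ i, ‖v i‖ ^ 2 = 1) : v ⬝ᵥ star v = 1 := by
  simp only [dotProduct, Pi.star_apply, Complex.star_def, Complex.mul_conj']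
  exact_mod_cast hv

section Realignment

/- `vec` stacks columns, so `vec Aᵀ (i, j) = A i j` is the row-major flattening of `A`; in
particular the pure state of `φ` is `vecMulVec (vec Φᵀ) (vec Φᴴ)`. -/

variable {a b c : ℕ}

def pathOperator (ρ₁₃ : Matrix (Fin a × Fin c) (Fin a × Fin c) ℂ)
    (ρ₂₃ : Matrix (Fin b × Fin c) (Fin b × Fin c) ℂ) (ρ₁₂ : Matrix (Fin a × Fin b) (Fin a × Fin b) ℂ) :
    Matrix (Fin a × Fin a) (Fin a × Fin a) ℂ :=
  realign (PT1 ρ₁₃) * realign (PT1 (swapRe ρ₂₃)) * realign (PT1 (swapRe ρ₁₂))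

theorem swapRe_kronecker (X : Matrix (Fin a) (Fin a) ℂ) (Y : Matrix (Fin b) (Fin b) ℂ) :
    swapRe (X ⊗ₖ Y) = Y ⊗ₖ X := by
  ext ⟨i, j⟩ ⟨i', j'⟩
  exact mul_comm _ _

theorem realign_PT1_kronecker (X : Matrix (Fin a) (Fin a) ℂ) (Y : Matrix (Fin b) (Fin b) ℂ) :
    realign (PT1 (X ⊗ₖ Y)) = vecMulVec (vec Xᵀ) (vec Y) := by
  ext ⟨i, i'⟩ ⟨k, k'⟩
  rfl

theorem PT1_vecMulVec_vec (A : Matrix (Fin a) (Fin b) ℂ) (B : Matrix (Fin b) (Fin a) ℂ) :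
    PT1 (vecMulVec (vec Aᵀ) (vec B)) = (A ⊗ₖ B).submatrix id Prod.swap := by
  ext ⟨i, j⟩ ⟨i', j'⟩
  rfl

theorem realign_PT1_swapRe_vecMulVec_vec (A : Matrix (Fin a) (Fin b) ℂ)
    (B : Matrix (Fin b) (Fin a) ℂ) :
    realign (PT1 (swapRe (vecMulVec (vec Aᵀ) (vec B)))) = (Aᵀ ⊗ₖ B).submatrix id Prod.swap := by
  ext ⟨j, j'⟩ ⟨i, i'⟩
  rfl

theorem trace_PT1_vecMulVec_vec_pow_three (A : Matrix (Fin a) (Fin b) ℂ)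
    (B : Matrix (Fin b) (Fin a) ℂ) :
    (PT1 (vecMulVec (vec Aᵀ) (vec B)) ^ 3).trace = ((A * B) ^ 3).trace := by
  rw [PT1_vecMulVec_vec, pow_succ, sq, kronecker_submatrix_swap_mul,
    trace_kronecker_mul_kronecker_submatrix_swap]
  simp only [pow_succ, pow_zero, Matrix.one_mul, Matrix.mul_assoc]

theorem pathOperator_product (Φ : Matrix (Fin a) (Fin b) ℂ) {χ : Fin c → ℂ}
    (hχ : χ ⬝ᵥ star χ = 1) :
    pathOperator ((Φ * Φᴴ) ⊗ₖ vecMulVec χ (star χ)) ((Φᴴ * Φ)ᵀ ⊗ₖ vecMulVec χ (star χ))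
      (vecMulVec (vec Φᵀ) (vec Φᴴ)) = vecMulVec (vec (Φ * Φᴴ)ᵀ) (vec (Φ * Φᴴ * (Φ * Φᴴ))) := by
  rw [pathOperator, swapRe_kronecker, realign_PT1_kronecker, realign_PT1_kronecker,
    vecMulVec_mul_vecMulVec, vec_vecMulVec_dotProduct_vec_transpose, hχ, one_pow, one_smul,
    vecMulVec_mul, realign_PT1_swapRe_vecMulVec_vec, vec_vecMul_kronecker_submatrix_swap,
    transpose_transpose]
  simp only [Matrix.mul_assoc]

end Realignment

section ProductState

variable {a b c : ℕ} {Φ : Matrix (Fin a) (Fin b) ℂ} {χ : Fin c → ℂ}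
  {ρ : Matrix (Fin a × Fin b × Fin c) (Fin a × Fin b × Fin c) ℂ}

theorem marginal₁₂_eq_of_product (hχ : χ ⬝ᵥ star χ = 1)
    (hρ : ∀ i j k i' j' k', ρ (i, j, k) (i', j', k') = Φ i j * star (Φ i' j') * (χ k * star (χ k')))
    {ρ₁₂ : Matrix (Fin a × Fin b) (Fin a × Fin b) ℂ}
    (hρ₁₂ : ∀ i j i' j', ρ₁₂ (i, j) (i', j') = ∑ k, ρ (i, j, k) (i', j', k)) :
    ρ₁₂ = vecMulVec (vec Φᵀ) (vec Φᴴ) := by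
  ext ⟨i, j⟩ ⟨i', j'⟩
  rw [hρ₁₂]
  simp only [hρ, ← Finset.mul_sum]
  exact (congrArg _ hχ).trans (mul_one _)

theorem marginal₁₃_eq_of_product
    (hρ : ∀ i j k i' j' k', ρ (i, j, k) (i', j', k') = Φ i j * star (Φ i' j') * (χ k * star (χ k')))
    {ρ₁₃ : Matrix (Fin a × Fin c) (Fin a × Fin c) ℂ}
    (hρ₁₃ : ∀ i k i' k', ρ₁₃ (i, k) (i', k') = ∑ j, ρ (i, j, k) (i', j, k')) :
    ρ₁₃ = (Φ * Φᴴ) ⊗ₖ vecMulVec χ (star χ) := by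
  ext ⟨i, k⟩ ⟨i', k'⟩
  rw [hρ₁₃]
  simp only [hρ, ← Finset.sum_mul]
  rfl

theorem marginal₂₃_eq_of_product
    (hρ : ∀ i j k i' j' k', ρ (i, j, k) (i', j', k') = Φ i j * star (Φ i' j') * (χ k * star (χ k')))
    {ρ₂₃ : Matrix (Fin b × Fin c) (Fin b × Fin c) ℂ}
    (hρ₂₃ : ∀ j k j' k', ρ₂₃ (j, k) (j', k') = ∑ i, ρ (i, j, k) (i, j', k')) :
    ρ₂₃ = (Φᴴ * Φ)ᵀ ⊗ₖ vecMulVec χ (star χ) := by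
  ext ⟨j, k⟩ ⟨j', k'⟩
  rw [hρ₂₃]
  simp only [hρ, ← Finset.sum_mul]
  exact congrArg (· * _) (Finset.sum_congr rfl fun _ _ => mul_comm _ _)

end ProductState

theorem stmt15_general {d₁ d₂ d₃ : ℕ}
    (φ : Fin d₁ × Fin d₂ → ℂ) (χ : Fin d₃ → ℂ)
    (hχ : ∑ k : Fin d₃, ‖χ k‖ ^ 2 = 1)
    (ψ : Fin d₁ × Fin d₂ × Fin d₃ → ℂ)
    (hψ : ∀ i j k, ψ (i, j, k) = φ (i, j) * χ k)
    (ρ : Matrix (Fin d₁ × Fin d₂ × Fin d₃) (Fin d₁ × Fin d₂ × Fin d₃) ℂ)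
    (hρ : ∀ u v, ρ u v = ψ u * (starRingEnd ℂ) (ψ v))
    (ρ₁₂ : Matrix (Fin d₁ × Fin d₂) (Fin d₁ × Fin d₂) ℂ)
    (hρ₁₂ : ∀ i j i' j', ρ₁₂ (i, j) (i', j') = ∑ k, ρ (i, j, k) (i', j', k))
    (ρ₂₃ : Matrix (Fin d₂ × Fin d₃) (Fin d₂ × Fin d₃) ℂ)
    (hρ₂₃ : ∀ j k j' k', ρ₂₃ (j, k) (j', k') = ∑ i, ρ (i, j, k) (i, j', k'))
    (ρ₁₃ : Matrix (Fin d₁ × Fin d₃) (Fin d₁ × Fin d₃) ℂ)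
    (hρ₁₃ : ∀ i k i' k', ρ₁₃ (i, k) (i', k') = ∑ j, ρ (i, j, k) (i', j, k'))
    (P : Matrix (Fin d₁ × Fin d₁) (Fin d₁ × Fin d₁) ℂ)
    (hP : P = realign (PT1 ρ₁₃) * realign (PT1 (swapRe ρ₂₃)) *
      realign (PT1 (swapRe ρ₁₂))) :
    (∀ n : ℕ, 1 ≤ n → (P ^ n).trace = ((PT1 ρ₁₂) ^ 3).trace ^ n) ∧
    (∀ μ ∈ spectrum ℂ P, μ ≠ 0 → μ = ((PT1 ρ₁₂) ^ 3).trace) := by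
  obtain ⟨Φ, hΦ⟩ : ∃ Φ : Matrix (Fin d₁) (Fin d₂) ℂ, ∀ i j, φ (i, j) = Φ i j :=
    ⟨of fun i j => φ (i, j), fun _ _ => rfl⟩
  set τ := Φ * Φᴴ
  have hχ₁ : χ ⬝ᵥ star χ = 1 := dotProduct_star_self_eq_one hχ
  have hρ' : ∀ i j k i' j' k', ρ (i, j, k) (i', j', k') =
      Φ i j * star (Φ i' j') * (χ k * star (χ k')) := fun i j k i' j' k' => by
    rw [hρ, hψ, hψ, hΦ, hΦ, starRingEnd_apply, star_mul']
    ring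
  have h₁₂ := marginal₁₂_eq_of_product hχ₁ hρ' hρ₁₂
  have hPτ : P = vecMulVec (vec τᵀ) (vec (τ * τ)) := by
    rw [hP, h₁₂, marginal₁₃_eq_of_product hρ' hρ₁₃, marginal₂₃_eq_of_product hρ' hρ₂₃]
    exact pathOperator_product Φ hχ₁
  have htr : ((PT1 ρ₁₂) ^ 3).trace = (τ ^ 3).trace := by
    rw [h₁₂, trace_PT1_vecMulVec_vec_pow_three]
  have hdot : vec (τ * τ) ⬝ᵥ vec τᵀ = (τ ^ 3).trace := by
    rw [vec_dotProduct_vec, ← transpose_mul, trace_transpose, pow_succ, sq, Matrix.mul_assoc τ τ τ]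
  refine ⟨fun n hn => ?_, fun μ hμ hμ0 => ?_⟩
  · rw [hPτ, trace_vecMulVec_pow _ _ (by omega), hdot, htr]
  · have hPP : P * P = (τ ^ 3).trace • P := by
      rw [hPτ, vecMulVec_mul_vecMulVec, hdot, vecMulVec_smul]
    rw [htr]
    simpa [hμ0] using spectrum_subset_of_mul_self_eq_smul hPP hμ

/-- for a biseparable pure state ψ = φ₁₂ ⊗ χ₃, the path operator
P = R(ρ₁₃^T₃)·R(ρ₃₂^T₂)·R(ρ₂₁^T₁) satisfies tr(Pⁿ) = (tr[(ρ₁₂^T₂)³])ⁿ for all n ≥ 1;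
in particular every nonzero eigenvalue of P equals tr[(ρ₁₂^T₂)³]. -/
theorem stmt15 {d₁ d₂ d₃ : ℕ}
    (φ : Fin d₁ × Fin d₂ → ℂ) (χ : Fin d₃ → ℂ)
    (hφ : ∑ u : Fin d₁ × Fin d₂, ‖φ u‖ ^ 2 = 1)
    (hχ : ∑ k : Fin d₃, ‖χ k‖ ^ 2 = 1)
    (ψ : Fin d₁ × Fin d₂ × Fin d₃ → ℂ)
    (hψ : ∀ i j k, ψ (i, j, k) = φ (i, j) * χ k)
    (ρ : Matrix (Fin d₁ × Fin d₂ × Fin d₃) (Fin d₁ × Fin d₂ × Fin d₃) ℂ)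
    (hρ : ∀ u v, ρ u v = ψ u * (starRingEnd ℂ) (ψ v))
    (ρ₁₂ : Matrix (Fin d₁ × Fin d₂) (Fin d₁ × Fin d₂) ℂ)
    (hρ₁₂ : ∀ i j i' j', ρ₁₂ (i, j) (i', j') = ∑ k, ρ (i, j, k) (i', j', k))
    (ρ₂₃ : Matrix (Fin d₂ × Fin d₃) (Fin d₂ × Fin d₃) ℂ)
    (hρ₂₃ : ∀ j k j' k', ρ₂₃ (j, k) (j', k') = ∑ i, ρ (i, j, k) (i, j', k'))
    (ρ₁₃ : Matrix (Fin d₁ × Fin d₃) (Fin d₁ × Fin d₃) ℂ)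
    (hρ₁₃ : ∀ i k i' k', ρ₁₃ (i, k) (i', k') = ∑ j, ρ (i, j, k) (i', j, k'))
    (P : Matrix (Fin d₁ × Fin d₁) (Fin d₁ × Fin d₁) ℂ)
    (hP : P = realign (PT1 ρ₁₃) * realign (PT1 (swapRe ρ₂₃)) *
      realign (PT1 (swapRe ρ₁₂))) :
    (∀ n : ℕ, 1 ≤ n → (P ^ n).trace = ((PT1 ρ₁₂) ^ 3).trace ^ n) ∧
    (∀ μ ∈ spectrum ℂ P, μ ≠ 0 → μ = ((PT1 ρ₁₂) ^ 3).trace) :=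
  stmt15_general φ χ hχ ψ hψ ρ hρ ρ₁₂ hρ₁₂ ρ₂₃ hρ₂₃ ρ₁₃ hρ₁₃ P hP
end
end
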